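/- If r is a 2n-balanced two-state rotor type, then UD(r) ≡_n r and DU(r) ≡_n r; in particular UD(r) ≡_n DU(r). -/

import Mathlib

open scoped Classical

/-! ### Periodic sequences and rotor types

A rotor type is modelled as a function `f : ℕ → ℕ` (0-based reindexing of the paper's
sequence `r(1), r(2), …`, so the paper's `r(k)` is `f (k-1)`), together with its minimal
period `n`.  The states of the rotor are the values occurring in one period. -/

def IsPeriodicWith {α : Type*} (f : ℕ → α) (n : ℕ) : Prop := ∀ k, f (k + n) = f k

def IsMinimalPeriod {α : Type*} (f : ℕ → α) (n : ℕ) : Prop :=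
  0 < n ∧ IsPeriodicWith f n ∧ ∀ m, 0 < m → IsPeriodicWith f m → n ≤ m

noncomputable def minPeriod {α : Type*} (f : ℕ → α) : ℕ :=
  sInf {n | 0 < n ∧ IsPeriodicWith f n}

/-- `f` (with period `n`) reads the same forwards and backwards:
`r(k) = r(n+1-k)` for `1 ≤ k ≤ n`, written 0-based. -/
def Palindromic (f : ℕ → ℕ) (n : ℕ) : Prop := ∀ k < n, f k = f (n - 1 - k)

/-- `f` (with period `n`) is block-repetitive with block length `m`. -/
def BlockRepetitive (f : ℕ → ℕ) (n m : ℕ) : Prop :=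
  2 ≤ m ∧ m ∣ n ∧ ∀ k : ℕ, ∀ j < m, f (k * m + j) = f (k * m)

def Boppy (f : ℕ → ℕ) (n : ℕ) : Prop := Palindromic f n ∨ ∃ m, BlockRepetitive f n m

/-- The set of states of a rotor type of period `n`. -/
def states (f : ℕ → ℕ) (n : ℕ) : Finset ℕ := (Finset.range n).image f

/-- Number of occurrences of the state `v` among the first `n` terms of `f`. -/
noncomputable def countIn (f : ℕ → ℕ) (n v : ℕ) : ℕ :=
  ((Finset.range n).filter (fun k => f k = v)).card

/-- Merging reduction `s → s'`: replace every occurrence of `s` by `s'`. -/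
def merge (f : ℕ → ℕ) (s s' : ℕ) : ℕ → ℕ := fun k => if f k = s then s' else f k

/-- Destructive reduction `x(s)`: delete every occurrence of `s` and re-index. -/
noncomputable def destroy (f : ℕ → ℕ) (s : ℕ) : ℕ → ℕ :=
  fun k => f (Nat.nth (fun i => f i ≠ s) k)

/-- A two-state rotor type with states `1` and `2`, both occurring. -/
def TwoState (f : ℕ → ℕ) : Prop :=
  (∀ k, f k = 1 ∨ f k = 2) ∧ (∃ k, f k = 1) ∧ (∃ k, f k = 2)

/-! ### The compressor

The particle's trajectory alternates: at step `t` (0-based) the source `v1` fires its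
`(t+1)`-st term `f t`; if it is `1`, the particle moves to `v2`, whose firing count so far
is the number of `1`'s among `f 0, …, f (t-1)`; if it is `2`, it moves to `v3` similarly.
From `v2`/`v3` the particle either returns to the source (no target hit) or hits target
`4`/`5` and restarts at the source.  `X Y : Bool` encode the variation, `true` = `U`:
at `v2` state `1` routes up to `v1` iff `X = true`; at `v3` state `1` routes up iff
`Y = true`. -/

noncomputable def hitAt (X Y : Bool) (r : ℕ → ℕ) (t : ℕ) : Option ℕ :=
  if r t = 1 then
    (if decide (r (countIn r t 1) = 1) ≠ X then some 4 else none)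
  else
    (if decide (r (countIn r t 2) = 1) ≠ Y then some 5 else none)

/-- The hitting sequence of the compressor variation `XY` on rotor type `r`:
the subsequence of recorded targets (`4` or `5`), in order. -/
noncomputable def compSeq (X Y : Bool) (r : ℕ → ℕ) : ℕ → ℕ :=
  fun k => (hitAt X Y r (Nat.nth (fun t => (hitAt X Y r t).isSome = true) k)).getD 4

noncomputable def UUseq (r : ℕ → ℕ) : ℕ → ℕ := compSeq true true r
noncomputable def UDseq (r : ℕ → ℕ) : ℕ → ℕ := compSeq true false r
noncomputable def DUseq (r : ℕ → ℕ) : ℕ → ℕ := compSeq false true r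
noncomputable def DDseq (r : ℕ → ℕ) : ℕ → ℕ := compSeq false false r

/-- The compressor output with targets `4, 5` relabelled as states `1, 2`. -/
noncomputable def compOp (X Y : Bool) (r : ℕ → ℕ) : ℕ → ℕ := fun k => compSeq X Y r k - 3

noncomputable def UUop (r : ℕ → ℕ) : ℕ → ℕ := compOp true true r
noncomputable def UDop (r : ℕ → ℕ) : ℕ → ℕ := compOp true false r
noncomputable def DUop (r : ℕ → ℕ) : ℕ → ℕ := compOp false true r
noncomputable def DDop (r : ℕ → ℕ) : ℕ → ℕ := compOp false false r

/-- A finite composition of compressor operations (each given by its pair of letters),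
with the targets relabelled back to `1, 2` after each application. -/
noncomputable def applyOps (ops : List (Bool × Bool)) (r : ℕ → ℕ) : ℕ → ℕ :=
  ops.foldl (fun s o => compOp o.1 o.2 s) r

/-- The hitting sequence of the depth-2 binary tree network `BT` on `r`
(targets `1,2,3,4`): every firing of the source produces a hit. -/
noncomputable def BTseq (r : ℕ → ℕ) : ℕ → ℕ :=
  fun t => if r t = 1 then (if r (countIn r t 1) = 1 then 1 else 2)
           else (if r (countIn r t 2) = 1 then 3 else 4)

/-- Two sequences are equivalent if one is obtained from the other by a relabelling
that is injective on the values of the first (a bijective relabelling of states). -/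
def SeqEquiv {α β : Type*} (f : ℕ → α) (g : ℕ → β) : Prop :=
  ∃ ρ : α → β, (∀ k, ρ (f k) = g k) ∧ ∀ k l, ρ (f k) = ρ (f l) → f k = f l

/-- Every aligned block of length `m` of `f` contains states `1` and `2` equally often
(`m = 2n` gives `2n`-balance). -/
def BalancedBlocks (f : ℕ → ℕ) (m : ℕ) : Prop :=
  ∀ k : ℕ, countIn (fun j => f (k * m + j)) m 1 = countIn (fun j => f (k * m + j)) m 2

/-- `f ≡_m g` : some relabelling of `f` (injective on states) has the same multiset of
entries as `g` on every aligned block of length `m`. -/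
def BlockEquiv (f g : ℕ → ℕ) (m : ℕ) : Prop :=
  ∃ ρ : ℕ → ℕ, (∀ k l, ρ (f k) = ρ (f l) ↔ f k = f l) ∧
    ∀ k : ℕ, (Multiset.range m).map (fun j => ρ (f (k * m + j))) =
             (Multiset.range m).map (fun j => g (k * m + j))

/-- `L` is a balanced run decomposition of one period (of length `p`) of `f`:
a list of positive run lengths summing to `p` such that each corresponding
consecutive run contains `1` and `2` equally often. -/
noncomputable def IsBRD (f : ℕ → ℕ) (p : ℕ) (L : List ℕ) : Prop :=
  L.sum = p ∧ (∀ a ∈ L, 0 < a) ∧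
  ∀ i : Fin L.length,
    countIn (fun j => f ((L.take i.1).sum + j)) (L.get i) 1 =
    countIn (fun j => f ((L.take i.1).sum + j)) (L.get i) 2

/-- `L` is a uniform run decomposition of one period (of length `p`) of `f`:
a list of positive run lengths summing to `p` such that each corresponding
consecutive run is constant. -/
def IsURD (f : ℕ → ℕ) (p : ℕ) (L : List ℕ) : Prop :=
  L.sum = p ∧ (∀ a ∈ L, 0 < a) ∧
  ∀ i : Fin L.length, ∀ j < L.get i, f ((L.take i.1).sum + j) = f ((L.take i.1).sum)

/-- The maximal number of runs in a BRD of `f` (period `p`). -/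
noncomputable def maxBRD (f : ℕ → ℕ) (p : ℕ) : ℕ :=
  sSup {m | ∃ L : List ℕ, IsBRD f p L ∧ L.length = m}

/-- The balance coefficient `b(f)` (with respect to period length `p`). -/
noncomputable def balCoeff (f : ℕ → ℕ) (p : ℕ) : ℚ := (maxBRD f p : ℚ) / (p : ℚ)

/-- The type of a run decomposition, as an infinite periodic sequence of run data. -/
def typeSeq (L : List ℕ) : ℕ → ℕ := fun i => L.getD (i % L.length) 0

/-- A BURD rotor: it has a BRD and a URD of the same type, i.e. the `i`-th balanced run
has length `2·b_i` where `b_i` is the length of the `i`-th uniform run. -/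
noncomputable def IsBURD (f : ℕ → ℕ) (p : ℕ) : Prop :=
  ∃ L M : List ℕ, IsBRD f p L ∧ IsURD f p M ∧ ∀ i, typeSeq L i = 2 * typeSeq M i

/-- The ba-frequency `m(f) = 2k/p` of an ab-ba sequence with period length `p`,
where `k` is the number of `21` blocks per period. -/
noncomputable def baFreq (f : ℕ → ℕ) (p : ℕ) : ℚ :=
  (2 * (((Finset.range (p / 2)).filter (fun j => f (2 * j) = 2)).card : ℚ)) / (p : ℚ)

/-! ### Rotor-router networks

A rotor-router network on a vertex type `V`: a source, a finite set of targets
(outdegree 0), and at every non-target vertex `v` the rotor pattern, recorded by the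
sequence `rotor v : ℕ → V` of heads of its successive out-edges.  The underlying digraph
has an edge `v → w` (for non-target `v`) iff `w` occurs in `v`'s rotor pattern. -/

structure RotorNetwork (V : Type) where
  source : V
  target : Finset V
  rotor : V → ℕ → V

namespace RotorNetwork

variable {V : Type} [DecidableEq V]

/-- One step of the particle dynamics on states `(current position, firing counts)`:
at a target, record it and restart at the source; at a non-target vertex `v`, fire the
next term of `v`'s rotor pattern. -/
noncomputable def step (N : RotorNetwork V) (s : V × (V → ℕ)) : V × (V → ℕ) :=
  if s.1 ∈ N.target then (N.source, s.2)
  else (N.rotor s.1 (s.2 s.1), Function.update s.2 s.1 (s.2 s.1 + 1))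

/-- The full trajectory of the particle, started at the source with all rotors fresh. -/
noncomputable def traj (N : RotorNetwork V) : ℕ → V × (V → ℕ)
  | 0 => (N.source, fun _ => 0)
  | t + 1 => N.step (N.traj t)

/-- The hitting sequence: the subsequence of targets visited, in order. -/
noncomputable def hitSeq (N : RotorNetwork V) : ℕ → V :=
  fun k => (N.traj (Nat.nth (fun t => (N.traj t).1 ∈ N.target) k)).1

/-- Adjacency of the underlying digraph. -/
def adj (N : RotorNetwork V) (v w : V) : Prop :=
  v ∉ N.target ∧ ∃ k, N.rotor v k = w

/-- A valid rotor-router network: the source is not a target, there is at least one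
target, and every non-target vertex can reach some target. -/
def Valid (N : RotorNetwork V) : Prop :=
  N.source ∉ N.target ∧ N.target.Nonempty ∧
  ∀ v : V, v ∉ N.target → ∃ t ∈ N.target, Relation.ReflTransGen N.adj v t

/-- The rotor pattern at `v` has type `r`: it is `e ∘ r` for some assignment `e` of
states to out-neighbours. -/
def HasType (N : RotorNetwork V) (v : V) (r : ℕ → ℕ) : Prop :=
  ∃ e : ℕ → V, ∀ k, N.rotor v k = e (r k)

end RotorNetwork

/-- The alternating rotor type `1, 2, 1, 2, …` of period `2`. -/
def rot12 : ℕ → ℕ := fun k => if k % 2 = 0 then 1 else 2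

/-- `r` is universal: every rotor type `r'` is, up to a bijective relabelling of states,
the hitting sequence of some finite rotor-router network all of whose rotors have type `r`. -/
noncomputable def Universal (r : ℕ → ℕ) : Prop :=
  ∀ (r' : ℕ → ℕ) (n' : ℕ), IsMinimalPeriod r' n' →
    ∃ (m : ℕ) (N : RotorNetwork (Fin m)), N.Valid ∧
      (∀ v, v ∉ N.target → N.HasType v r) ∧ SeqEquiv N.hitSeq r'

/-- The (1-based) position of the `m`-th occurrence of the state `v` in `f`
(`posOf f 1 = f`, `posOf f 2 = g` in the paper's notation; `countIn f · 1 = F`,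
`countIn f · 2 = G`). -/
noncomputable def posOf (f : ℕ → ℕ) (v m : ℕ) : ℕ := Nat.nth (fun k => f k = v) (m - 1) + 1

/-!
In the variations `UD` and `DU`, the `j`-th firing of `v₂` is a hit exactly when `r j` is one
state and the `j`-th firing of `v₃` is a hit exactly when `r j` is the other one. By
`2n`-balance the first `2kn` firings of the source send the particle `kn` times to `v₂` and `kn`
times to `v₃`, so they use rotor positions `0, …, kn - 1` at both and produce exactly `kn` hits.
Hence the `k`-th output block of length `n` consists of the hits among source firings
`2kn, …, 2kn + 2n - 1`, and these correspond one-to-one to the positions `kn, …, kn + n - 1` of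
`r`, each contributing the letter `1` (a hit at `v₂`) or `2` (a hit at `v₃`) according to its
state: the letter is the state itself for `DU` and the other state for `UD`.
-/

namespace Nat

variable {P Q : ℕ → Prop} [DecidablePred P] [DecidablePred Q]

theorem count_mul_of_forall_count_block {m c : ℕ}
    (h : ∀ k, count (fun j => P (k * m + j)) m = c) (k : ℕ) : count P (k * m) = k * c := by
  induction k with
  | zero => simp
  | succ k ih => rw [succ_mul, count_add, ih, h, succ_mul]

theorem count_or_of_disjoint (h : ∀ t, ¬(P t ∧ Q t)) (N : ℕ) :
    count (fun t => P t ∨ Q t) N = count P N + count Q N := by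
  induction N with
  | zero => simp
  | succ N ih =>
    simp only [count_succ, ih]
    have hN := h N
    split_ifs <;> grind

theorem count_and_count (N : ℕ) :
    count (fun t => P t ∧ Q (count P t)) N = count Q (count P N) := by
  induction N with
  | zero => simp
  | succ N ih =>
    by_cases hN : P N <;> simp [count_succ, ih, hN]

theorem count_comp_nth_count (R : ℕ → Prop) [DecidablePred R] (N : ℕ) :
    count (fun i => R (nth P i)) (count P N) = count (fun t => P t ∧ R t) N := by
  rw [← count_and_count]
  congr 1
  ext t
  exact and_congr_right fun ht => by rw [nth_count ht]

end Nat

theorem Multiset.map_range_block_eq_of_count {f g : ℕ → ℕ} {m : ℕ}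
    (h : ∀ w k, Nat.count (fun i => f i = w) (k * m) = Nat.count (fun i => g i = w) (k * m))
    (k : ℕ) :
    (Multiset.range m).map (fun j => f (k * m + j)) =
      (Multiset.range m).map (fun j => g (k * m + j)) := by
  ext w
  have hblock : ∀ F : ℕ → ℕ, Multiset.count w ((Multiset.range m).map (fun j => F (k * m + j))) =
      Nat.count (fun i => F i = w) (k * m + m) - Nat.count (fun i => F i = w) (k * m) := by
    intro F
    rw [Nat.count_add, Nat.add_sub_cancel_left, Multiset.count_map,
      ← Multiset.countP_eq_card_filter, Multiset.range, Multiset.coe_countP, Nat.count]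
    simp only [@eq_comm _ w]
  have hnext := h w (k + 1)
  rw [Nat.succ_mul] at hnext
  rw [hblock, hblock, hnext, h]

theorem countIn_eq_count (f : ℕ → ℕ) (n v : ℕ) :
    countIn f n v = Nat.count (fun k => f k = v) n :=
  (Nat.count_eq_card_filter_range _ _).symm

theorem compOp_eq_one_or_two (X Y : Bool) (r : ℕ → ℕ) (i : ℕ) :
    compOp X Y r i = 1 ∨ compOp X Y r i = 2 := by
  unfold compOp compSeq hitAt
  split_ifs <;> simp

section Compressor

variable {r : ℕ → ℕ} (hr : ∀ t, r t = 1 ∨ r t = 2)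
include hr

theorem hitAt_getD_sub_three {X Y : Bool} {t : ℕ} (h : (hitAt X Y r t).isSome) :
    (hitAt X Y r t).getD 4 - 3 = r t := by
  unfold hitAt at h ⊢
  rcases hr t with ht | ht <;> split_ifs at h ⊢ <;> simp_all

theorem isSome_hitAt_not_iff (X : Bool) (t : ℕ) :
    (hitAt X (!X) r t).isSome ↔
      (r t = 1 ∧ decide (r (Nat.count (fun s => r s = 1) t) = 1) ≠ X) ∨
      (r t = 2 ∧ decide (r (Nat.count (fun s => r s = 2) t) = 1) = X) := by
  rcases hr t with h | h <;> simp [hitAt, h, countIn_eq_count]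

variable {n : ℕ} (hbal : BalancedBlocks r (2 * n))
include hbal

theorem count_mul_of_balancedBlocks {v : ℕ} (hv : v = 1 ∨ v = 2) (k : ℕ) :
    Nat.count (fun t => r t = v) (k * (2 * n)) = k * n := by
  refine Nat.count_mul_of_forall_count_block (fun k => ?_) k
  have hk := hbal k
  have htotal := Nat.count_or_of_disjoint (P := fun j => r (k * (2 * n) + j) = 1)
    (Q := fun j => r (k * (2 * n) + j) = 2) (fun _ => by omega) (2 * n)
  rw [countIn_eq_count, countIn_eq_count] at hk
  simp only [hr, Nat.count_true] at htotal
  rcases hv with rfl | rfl <;> omega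

-- `if decide (r j = 1) = X then 2 else 1` is the letter that position `j` of `r` contributes
-- to the output: `r j` itself for `DU` (`X = false`), the other state for `UD` (`X = true`).
theorem count_hitAt_not_and (X : Bool) (R : ℕ → Prop) [DecidablePred R] (k : ℕ) :
    Nat.count (fun t => (hitAt X (!X) r t).isSome ∧ R (r t)) (k * (2 * n)) =
      Nat.count (fun j => R (if decide (r j = 1) = X then 2 else 1)) (k * n) := by
  set Q₁ : ℕ → Prop := fun j => decide (r j = 1) ≠ X ∧ R 1
  set Q₂ : ℕ → Prop := fun j => decide (r j = 1) = X ∧ R 2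
  calc Nat.count (fun t => (hitAt X (!X) r t).isSome ∧ R (r t)) (k * (2 * n))
      = Nat.count (fun t => (r t = 1 ∧ Q₁ (Nat.count (fun s => r s = 1) t)) ∨
          (r t = 2 ∧ Q₂ (Nat.count (fun s => r s = 2) t))) (k * (2 * n)) := by
        congr 1
        ext t
        rw [isSome_hitAt_not_iff hr]
        rcases hr t with h | h <;> simp [h, Q₁, Q₂]
    _ = Nat.count Q₁ (k * n) + Nat.count Q₂ (k * n) := by
        rw [Nat.count_or_of_disjoint (fun _ => by omega), Nat.count_and_count,
          Nat.count_and_count, count_mul_of_balancedBlocks hr hbal (.inl rfl),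
          count_mul_of_balancedBlocks hr hbal (.inr rfl)]
    _ = Nat.count (fun j => Q₁ j ∨ Q₂ j) (k * n) :=
        (Nat.count_or_of_disjoint (fun _ h => h.1.1 h.2.1) _).symm
    _ = Nat.count (fun j => R (if decide (r j = 1) = X then 2 else 1)) (k * n) := by
        congr 1
        ext j
        by_cases h : decide (r j = 1) = X <;> simp [h, Q₁, Q₂]

theorem count_compOp_not (X : Bool) (w k : ℕ) :
    Nat.count (fun i => compOp X (!X) r i = w) (k * n) =
      Nat.count (fun j => (if decide (r j = 1) = X then 2 else 1) = w) (k * n) := by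
  have hhits : Nat.count (fun t => (hitAt X (!X) r t).isSome) (k * (2 * n)) = k * n := by
    simpa using count_hitAt_not_and hr hbal X (fun _ => True) k
  rw [← count_hitAt_not_and hr hbal X (· = w), ← hhits]
  unfold compOp compSeq
  rw [Nat.count_comp_nth_count (fun t => (hitAt X (!X) r t).getD 4 - 3 = w)]
  congr 1
  ext t
  exact and_congr_right fun h => by rw [hitAt_getD_sub_three hr h]

theorem map_range_compOp_not (X : Bool) (k : ℕ) :
    (Multiset.range n).map (fun j => compOp X (!X) r (k * n + j)) =
      (Multiset.range n).map (fun j => if decide (r (k * n + j) = 1) = X then 2 else 1) :=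
  Multiset.map_range_block_eq_of_count (g := fun j => if decide (r j = 1) = X then 2 else 1)
    (count_compOp_not hr hbal X) k

end Compressor

theorem statement8_general (n : ℕ) (r : ℕ → ℕ)
    (h2 : TwoState r) (hbal : BalancedBlocks r (2 * n)) :
    BlockEquiv (UDop r) r n ∧ BlockEquiv (DUop r) r n ∧
    BlockEquiv (UDop r) (DUop r) n := by
  have hr := h2.1
  have hDU (k : ℕ) : (Multiset.range n).map (fun j => DUop r (k * n + j)) =
      (Multiset.range n).map (fun j => r (k * n + j)) := by
    refine (map_range_compOp_not hr hbal false k).trans (Multiset.map_congr rfl fun j _ => ?_)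
    rcases hr (k * n + j) with h | h <;> simp [h]
  have hUD (k : ℕ) : (Multiset.range n).map (fun j => 3 - UDop r (k * n + j)) =
      (Multiset.range n).map (fun j => r (k * n + j)) := by
    rw [show (fun j => 3 - UDop r (k * n + j)) =
        (3 - ·) ∘ fun j => compOp true (!true) r (k * n + j) from rfl,
      ← Multiset.map_map, map_range_compOp_not hr hbal true k, Multiset.map_map]
    refine Multiset.map_congr rfl fun j _ => ?_
    rcases hr (k * n + j) with h | h <;> simp [h]
  have hswap (k l : ℕ) : 3 - UDop r k = 3 - UDop r l ↔ UDop r k = UDop r l := by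
    rcases compOp_eq_one_or_two true false r k with hk | hk <;>
      rcases compOp_eq_one_or_two true false r l with hl | hl <;> simp [UDop, hk, hl]
  exact ⟨⟨(3 - ·), hswap, hUD⟩, ⟨id, fun _ _ => Iff.rfl, hDU⟩,
    ⟨(3 - ·), hswap, fun k => (hUD k).trans (hDU k).symm⟩⟩

/-- If `r` is a `2n`-balanced two-state rotor type, then
`UD(r) ≡ₙ r` and `DU(r) ≡ₙ r`; in particular `UD(r) ≡ₙ DU(r)`
(targets `4, 5` identified with states `1, 2`). -/
theorem statement8 (n : ℕ) (hn : 1 ≤ n) (r : ℕ → ℕ) (p : ℕ)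
    (h2 : TwoState r) (hmin : IsMinimalPeriod r p)
    (hbal : BalancedBlocks r (2 * n)) :
    BlockEquiv (UDop r) r n ∧ BlockEquiv (DUop r) r n ∧
    BlockEquiv (UDop r) (DUop r) n :=
  statement8_general n r h2 hbal
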